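/- Let C be a compact convex body in ℝ², centrally symmetric with center p. Then C cannot be partitioned into two subsets of strictly smaller diameter if and only if every boundary point of C is an endpoint of a diameter segment, i.e., for every x ∈ ∂C there exists y ∈ C with dist(x, y) = diam(C). -/

import Mathlib

/-!
Let `D = diam C`. Central symmetry puts `C` inside the closed ball of radius `D / 2` about `p`,
and a point `z ∈ C` is an endpoint of a diameter exactly when `dist z p = D / 2`, its partner
being `2 • p - z`.

If a boundary point `x` has `dist x p < D / 2`, cut `C` along the line through `p` and `x`.
A half of diameter `D` would, by strict convexity of the Euclidean norm, contain a pair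
`u, 2 • p - u` with `dist u p = D / 2`. Both lie in the closed half-plane, so `u` lies on the
cutting line, beyond `x` as seen from `p`, and this puts `x` in the interior of `C`.

If every boundary point is at distance `D / 2` from `p`, then `C` contains the circle of radius
`D / 2` about `p`. The closures of two pieces covering `C` cover that circle, and since the circle
is connected one of them contains an antipodal pair, at distance `D`.
-/

open Metric Set
open scoped RealInnerProductSpace

theorem IsCompact.exists_dist_eq_diam {X : Type*} [PseudoMetricSpace X] {s : Set X}
    (hs : IsCompact s) (hne : s.Nonempty) : ∃ x ∈ s, ∃ y ∈ s, dist x y = diam s := by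
  obtain ⟨⟨x, y⟩, ⟨hx, hy⟩, hmax⟩ :=
    (hs.prod hs).exists_isMaxOn (hne.prod hne) continuous_dist.continuousOn
  refine ⟨x, hx, y, hy, le_antisymm (dist_le_diam_of_mem hs.isBounded hx hy) ?_⟩
  exact diam_le_of_forall_dist_le dist_nonneg fun a ha b hb => hmax (mk_mem_prod ha hb)

theorem IsPreconnected.exists_mem_and_map_mem_of_mapsTo {X : Type*} [TopologicalSpace X]
    {S K₁ K₂ : Set X} {σ : X → X} (hS : IsPreconnected S) (hne : S.Nonempty)
    (hσS : MapsTo σ S S) (h₁ : IsClosed K₁) (h₂ : IsClosed K₂)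
    (hcover : S ⊆ K₁ ∪ K₂) : ∃ x ∈ S, (x ∈ K₁ ∧ σ x ∈ K₁) ∨ (x ∈ K₂ ∧ σ x ∈ K₂) := by
  by_contra! h
  have hsplit : S ⊆ K₁ᶜ ∪ K₂ᶜ := by
    rintro x hx
    by_contra! hx'
    simp only [mem_union, mem_compl_iff, not_or, not_not] at hx'
    rcases hcover (hσS hx) with hσx | hσx
    exacts [(h x hx).1 hx'.1 hσx, (h x hx).2 hx'.2 hσx]
  obtain ⟨x, hx⟩ := hne
  have hne₁₂ : (S ∩ K₁ᶜ).Nonempty ∧ (S ∩ K₂ᶜ).Nonempty := by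
    by_cases hx₁ : x ∈ K₁
    · have hx₂ : x ∉ K₂ := (hsplit hx).resolve_left (not_not.2 hx₁)
      exact ⟨⟨σ x, hσS hx, (h x hx).1 hx₁⟩, ⟨x, hx, hx₂⟩⟩
    · have hx₂ : x ∈ K₂ := (hcover hx).resolve_left hx₁
      exact ⟨⟨x, hx, hx₁⟩, ⟨σ x, hσS hx, (h x hx).2 hx₂⟩⟩
  obtain ⟨y, hy, hy₁, hy₂⟩ :=
    hS _ _ h₁.isOpen_compl h₂.isOpen_compl hsplit hne₁₂.1 hne₁₂.2
  rcases hcover hy with hy' | hy'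
  exacts [hy₁ hy', hy₂ hy']

section NormedSpace

variable {E : Type*} [NormedAddCommGroup E] [NormedSpace ℝ E] {C : Set E} {p : E}

theorem dist_two_smul_sub (p z : E) : dist z ((2 : ℝ) • p - z) = 2 * dist z p := by
  rw [dist_eq_norm, dist_eq_norm, show z - ((2 : ℝ) • p - z) = (2 : ℝ) • (z - p) by module,
    norm_smul, Real.norm_two]

theorem dist_two_smul_sub_center (p z : E) : dist ((2 : ℝ) • p - z) p = dist z p := by
  rw [dist_eq_norm, dist_eq_norm, show (2 : ℝ) • p - z - p = -(z - p) by module, norm_neg]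

theorem Convex.center_mem_interior (hconv : Convex ℝ C) (hint : (interior C).Nonempty)
    (hsym : ∀ x ∈ C, (2 : ℝ) • p - x ∈ C) : p ∈ interior C := by
  obtain ⟨a, ha⟩ := hint
  convert hconv.combo_interior_self_mem_interior ha (hsym a (interior_subset ha))
    (by norm_num : (0 : ℝ) < 1 / 2) (by norm_num : (0 : ℝ) ≤ 1 / 2) (by norm_num) using 1
  module

theorem subset_closedBall_half_diam (hb : Bornology.IsBounded C)
    (hsym : ∀ x ∈ C, (2 : ℝ) • p - x ∈ C) : C ⊆ closedBall p (diam C / 2) := by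
  intro z hz
  have := dist_le_diam_of_mem hb hz (hsym z hz)
  rw [dist_two_smul_sub] at this
  rw [mem_closedBall]
  linarith

theorem exists_dist_eq_diam_iff (hb : Bornology.IsBounded C)
    (hsym : ∀ x ∈ C, (2 : ℝ) • p - x ∈ C) {z : E} (hz : z ∈ C) :
    (∃ y ∈ C, dist z y = diam C) ↔ dist z p = diam C / 2 := by
  have hball := subset_closedBall_half_diam hb hsym
  constructor
  · rintro ⟨y, hy, hzy⟩
    have hzp := mem_closedBall.1 (hball hz)
    have hyp := mem_closedBall'.1 (hball hy)
    linarith [dist_triangle z p y]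
  · exact fun h => ⟨_, hsym z hz, by rw [dist_two_smul_sub, h]; ring⟩

theorem closedBall_subset_of_frontier_subset_sphere {r : ℝ} (hC : IsClosed C)
    (hp : p ∈ interior C) (hr : 0 < r) (h : frontier C ⊆ sphere p r) : closedBall p r ⊆ C := by
  have hcover : ball p r ⊆ interior C ∪ Cᶜ := by
    intro z hz
    by_contra! hz'
    simp only [mem_union, mem_compl_iff, not_or, not_not] at hz'
    have hzf : z ∈ frontier C := ⟨subset_closure hz'.2, hz'.1⟩
    exact (mem_sphere.1 (h hzf)).not_lt (mem_ball.1 hz)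
  have hball : ball p r ⊆ interior C :=
    (convex_ball p r).isPreconnected.subset_left_of_subset_union isOpen_interior
      hC.isOpen_compl (disjoint_compl_right.mono_left interior_subset) hcover
      ⟨p, mem_ball_self hr, hp⟩
  rw [← closure_ball p hr.ne']
  exact closure_minimal (hball.trans interior_subset) hC

theorem two_mul_le_max_diam_of_sphere_subset_union (hrank : 1 < Module.rank ℝ E)
    {C₁ C₂ : Set E} {r : ℝ} (h₁ : Bornology.IsBounded C₁) (h₂ : Bornology.IsBounded C₂)
    (h : sphere p r ⊆ C₁ ∪ C₂) : 2 * r ≤ max (diam C₁) (diam C₂) := by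
  rcases lt_or_ge r 0 with hr | hr
  · linarith [diam_nonneg (s := C₁), le_max_left (diam C₁) (diam C₂)]
  have : Nontrivial E := rank_pos_iff_nontrivial.1 (zero_lt_one.trans hrank)
  obtain ⟨z, hz, hpair⟩ := (isPreconnected_sphere hrank p r).exists_mem_and_map_mem_of_mapsTo
    (NormedSpace.sphere_nonempty.2 hr) (σ := fun z => (2 : ℝ) • p - z)
    (fun z hz => by simpa only [mem_sphere, dist_two_smul_sub_center] using hz)
    isClosed_closure isClosed_closure (h.trans (union_subset_union subset_closure subset_closure))
  have hdist : dist z ((2 : ℝ) • p - z) = 2 * r := by rw [dist_two_smul_sub, mem_sphere.1 hz]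
  rcases hpair with ⟨hz, hz'⟩ | ⟨hz, hz'⟩
  · calc 2 * r = dist z ((2 : ℝ) • p - z) := hdist.symm
      _ ≤ diam (closure C₁) := dist_le_diam_of_mem h₁.closure hz hz'
      _ = diam C₁ := diam_closure C₁
      _ ≤ _ := le_max_left _ _
  · calc 2 * r = dist z ((2 : ℝ) • p - z) := hdist.symm
      _ ≤ diam (closure C₂) := dist_le_diam_of_mem h₂.closure hz hz'
      _ = diam C₂ := diam_closure C₂
      _ ≤ _ := le_max_right _ _

theorem Convex.mem_interior_of_sub_eq_smul (hconv : Convex ℝ C) (hp : p ∈ interior C)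
    {q x : E} (hq : q ∈ C) {s : ℝ} (hs : 1 < s) (h : q - p = s • (x - p)) : x ∈ interior C := by
  have hs₀ : s ≠ 0 := by positivity
  have hx : x = q + (1 - s⁻¹) • (p - q) := by
    obtain rfl : q = p + s • (x - p) := by rw [← h]; abel
    match_scalars <;> field_simp <;> ring
  rw [hx]
  exact hconv.add_smul_sub_mem_interior hq hp
    ⟨sub_pos.2 (inv_lt_one_of_one_lt₀ hs), by linarith [inv_pos.2 (zero_lt_one.trans hs)]⟩

end NormedSpace

section StrictConvexSpace

variable {E : Type*} [NormedAddCommGroup E] [NormedSpace ℝ E] [StrictConvexSpace ℝ E]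
  {C : Set E} {p : E}

theorem IsCompact.exists_antipodal_of_subset_closedBall {S : Set E} (hS : IsCompact S)
    (hne : S.Nonempty) (hsub : S ⊆ closedBall p (diam S / 2)) :
    ∃ u ∈ S, (2 : ℝ) • p - u ∈ S ∧ dist u p = diam S / 2 := by
  obtain ⟨u, hu, v, hv, huv⟩ := hS.exists_dist_eq_diam hne
  have hup := mem_closedBall.1 (hsub hu)
  have hpv := mem_closedBall'.1 (hsub hv)
  have htri := dist_triangle u p v
  have hmid : p = midpoint ℝ u v := eq_midpoint_of_dist_eq_half (by linarith) (by linarith)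
  have hv' : v = (2 : ℝ) • p - u := by
    rw [hmid, midpoint_eq_smul_add, invOf_eq_inv]
    module
  exact ⟨u, hu, hv' ▸ hv, by linarith⟩

theorem diam_sep_nonneg_lt_diam (hC : IsCompact C) (hconv : Convex ℝ C) (hp : p ∈ interior C)
    (hsym : ∀ x ∈ C, (2 : ℝ) • p - x ∈ C) {x : E} (hx : x ∈ frontier C)
    (hxp : dist x p < diam C / 2) {f : E →L[ℝ] ℝ}
    (hf : LinearMap.ker (f : E →ₗ[ℝ] ℝ) ≤ ℝ ∙ (x - p)) :
    diam {z ∈ C | 0 ≤ f (z - p)} < diam C := by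
  set S := {z ∈ C | 0 ≤ f (z - p)}
  have hS : IsCompact S :=
    hC.inter_right (isClosed_le continuous_const (f.continuous.comp (continuous_sub_right p)))
  have hpS : p ∈ S := ⟨interior_subset hp, by simp⟩
  refine (diam_mono (sep_subset _ _) hC.isBounded).lt_of_ne fun hdiam => hx.2 ?_
  obtain ⟨u, hu, hu', hup⟩ := hS.exists_antipodal_of_subset_closedBall ⟨p, hpS⟩
    (hdiam ▸ (sep_subset _ _).trans (subset_closedBall_half_diam hC.isBounded hsym))
  have hfu : f (u - p) = 0 := by
    have := hu'.2
    rw [show (2 : ℝ) • p - u - p = -(u - p) by module, map_neg] at this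
    linarith [hu.2]
  obtain ⟨t, ht⟩ := Submodule.mem_span_singleton.1 (hf hfu)
  obtain ⟨q, hq, hqt⟩ : ∃ q ∈ C, q - p = |t| • (x - p) := by
    rcases le_or_gt 0 t with h | h
    · exact ⟨u, hu.1, by rw [abs_of_nonneg h, ht]⟩
    · exact ⟨_, hu'.1, by rw [abs_of_neg h, neg_smul, ht]; module⟩
  have ht₁ : 1 < |t| := by
    have hnorm : |t| * dist x p = diam C / 2 := by
      rw [← hdiam, ← hup, dist_eq_norm, dist_eq_norm, ← ht, norm_smul, Real.norm_eq_abs]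
    nlinarith [dist_nonneg (x := x) (y := p)]
  exact hconv.mem_interior_of_sub_eq_smul hp hq ht₁ hqt

theorem exists_union_eq_diam_lt_of_mem_frontier (hC : IsCompact C) (hconv : Convex ℝ C)
    (hp : p ∈ interior C) (hsym : ∀ x ∈ C, (2 : ℝ) • p - x ∈ C) {x : E} (hx : x ∈ frontier C)
    (hxp : dist x p < diam C / 2) {f : E →L[ℝ] ℝ}
    (hf : LinearMap.ker (f : E →ₗ[ℝ] ℝ) ≤ ℝ ∙ (x - p)) :
    ∃ C₁ C₂ : Set E, C = C₁ ∪ C₂ ∧ diam C₁ < diam C ∧ diam C₂ < diam C := by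
  refine ⟨{z ∈ C | 0 ≤ f (z - p)}, {z ∈ C | 0 ≤ (-f) (z - p)}, ?_,
    diam_sep_nonneg_lt_diam hC hconv hp hsym hx hxp hf,
    diam_sep_nonneg_lt_diam hC hconv hp hsym hx hxp fun z hz => hf (by simpa using hz)⟩
  ext z
  simp only [mem_union, mem_ofPred_eq, neg_apply, neg_nonneg, ← and_or_left]
  exact (and_iff_left (le_total _ _)).symm

end StrictConvexSpace

theorem exists_ker_le_span_singleton_of_finrank_eq_two {E : Type*} [NormedAddCommGroup E]
    [InnerProductSpace ℝ E] (h : Module.finrank ℝ E = 2) {v : E} (hv : v ≠ 0) :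
    ∃ f : E →L[ℝ] ℝ, LinearMap.ker (f : E →ₗ[ℝ] ℝ) ≤ ℝ ∙ v := by
  have : Fact (Module.finrank ℝ E = 2) := ⟨h⟩
  have : FiniteDimensional ℝ E := .of_fact_finrank_eq_succ 1
  let o : Orientation ℝ E (Fin 2) := (Module.finBasisOfFinrankEq ℝ E h).orientation
  refine ⟨o.areaForm' v, fun z hz => Submodule.mem_span_singleton.2
    ⟨⟪v, z⟫ / ‖v‖ ^ 2, ext_inner_right ℝ fun y => ?_⟩⟩
  have key := o.inner_mul_inner_add_areaForm_mul_areaForm v z y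
  replace hz : o.areaForm v z = 0 := hz
  rw [hz, zero_mul, add_zero] at key
  have : ‖v‖ ≠ 0 := norm_ne_zero_iff.2 hv
  rw [real_inner_smul_left, div_mul_eq_mul_div, key]
  field_simp

theorem no_partition_iff_all_boundary_endpoints
    (C : Set (EuclideanSpace ℝ (Fin 2))) (p : EuclideanSpace ℝ (Fin 2))
    (hC : IsCompact C) (hconv : Convex ℝ C) (hint : (interior C).Nonempty)
    (hsym : ∀ x ∈ C, (2 : ℝ) • p - x ∈ C) :
    (¬ ∃ C₁ C₂ : Set (EuclideanSpace ℝ (Fin 2)), C = C₁ ∪ C₂ ∧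
        Metric.diam C₁ < Metric.diam C ∧ Metric.diam C₂ < Metric.diam C) ↔
      (∀ x ∈ frontier C, ∃ y ∈ C, dist x y = Metric.diam C) := by
  have hp : p ∈ interior C := hconv.center_mem_interior hint hsym
  have hendpoint := fun z (hz : z ∈ C) => exists_dist_eq_diam_iff hC.isBounded hsym hz
  constructor
  · intro hno x hx
    by_contra hxy
    have hxC : x ∈ C := hC.isClosed.frontier_subset hx
    have hxp : dist x p < diam C / 2 :=
      (mem_closedBall.1 (subset_closedBall_half_diam hC.isBounded hsym hxC)).lt_of_ne
        (mt (hendpoint x hxC).2 hxy)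
    have hxp' : x - p ≠ 0 := sub_ne_zero.2 fun h => hx.2 (h ▸ hp)
    obtain ⟨f, hf⟩ :=
      exists_ker_le_span_singleton_of_finrank_eq_two finrank_euclideanSpace_fin hxp'
    exact hno (exists_union_eq_diam_lt_of_mem_frontier hC hconv hp hsym hx hxp hf)
  · rintro hall ⟨C₁, C₂, hC₁₂, h₁, h₂⟩
    have hD : 0 < diam C / 2 := half_pos (diam_nonneg.trans_lt h₁)
    have hsphere : sphere p (diam C / 2) ⊆ C₁ ∪ C₂ := hC₁₂ ▸ sphere_subset_closedBall.trans
      (closedBall_subset_of_frontier_subset_sphere hC.isClosed hp hD fun z hz =>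
        (hendpoint z (hC.isClosed.frontier_subset hz)).1 (hall z hz))
    have hrank : 1 < Module.rank ℝ (EuclideanSpace ℝ (Fin 2)) := by
      rw [← Module.finrank_eq_rank, finrank_euclideanSpace_fin]; norm_num
    have := two_mul_le_max_diam_of_sphere_subset_union hrank
      (hC.isBounded.subset (hC₁₂ ▸ subset_union_left))
      (hC.isBounded.subset (hC₁₂ ▸ subset_union_right)) hsphere
    linarith [max_lt h₁ h₂]
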